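/- arXiv:hep-th/9704138 — 4 statements merged into one kernel-verified Lean document; each statement's English description precedes it below -/
import Mathlib

section
/- For n ≥ 1 and r variables q₁,…,q_r with elementary symmetric polynomials e₁,…,e_r, the power sum p_n = q₁ⁿ + ⋯ + q_rⁿ satisfies Waring's formula: p_n = n · Σ (-1)^{n + l₁ + ⋯ + l_r} · (l₁ + ⋯ + l_r - 1)!/(l₁!⋯l_r!) · e₁^{l₁}⋯e_r^{l_r}, where the sum is over all tuples (l₁,…,l_r) of nonnegative integers with l₁ + 2l₂ + ⋯ + r·l_r = n. -/
/-!
Let `P_n` be `n` times the right-hand side. By strong induction it suffices that `P_n` satisfies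
Newton's identity `P_n = (-1)^(n+1) n e_n - ∑_{0<i<n} (-1)^i e_i P_{n-i}`, as `p_n` does.
Read `l` as a partition of `n` with `l_j` parts equal to `j + 1`. Multiplying `P_{n-i}` by `e_i`
adds a part `i`, so the coefficient of `e^l` in the sum is `-∑_{l_j > 0} (-1)^j a(l - δ_j)`,
where `a` is the coefficient of `P`. Since `∑_j (n - j - 1) l_j = n (|l| - 1)`, this equals
`-a(l)` as soon as `l` has at least two parts; the partitions with a single part `n` give `n e_n`.
-/

open MvPolynomial Finset

open scoped Nat

theorem MvPolynomial.esymm_eq_zero_of_card_lt (σ R : Type*) [Fintype σ] [CommSemiring R] {n : ℕ}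
    (h : Fintype.card σ < n) : esymm σ R n = 0 := by
  rw [esymm, Finset.powersetCard_eq_empty.2 (by simpa using h), sum_empty]

namespace Waring

variable {r : ℕ}

/-- `l : Fin r → ℕ` encodes the partition with `l j` parts equal to `j + 1`; `weight l` is the
partitioned number and `numParts l` the number of parts. -/
def weight (l : Fin r → ℕ) : ℕ := ∑ j : Fin r, ((j : ℕ) + 1) * l j

def numParts (l : Fin r → ℕ) : ℕ := ∑ j, l j

lemma weight_add (l l' : Fin r → ℕ) : weight (l + l') = weight l + weight l' := by
  simp only [weight, Pi.add_apply, mul_add, sum_add_distrib]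

lemma weight_single (j : Fin r) (k : ℕ) : weight (Pi.single j k) = ((j : ℕ) + 1) * k := by
  simp [weight, Pi.single_apply]

lemma numParts_add (l l' : Fin r → ℕ) : numParts (l + l') = numParts l + numParts l' :=
  sum_add_distrib

lemma numParts_single (j : Fin r) (k : ℕ) : numParts (Pi.single j k) = k := by
  simp [numParts, Pi.single_apply]

lemma numParts_eq_zero_iff {l : Fin r → ℕ} : numParts l = 0 ↔ l = 0 := by
  simp [numParts, sum_eq_zero_iff, funext_iff]

lemma mul_le_weight (l : Fin r → ℕ) (j : Fin r) : ((j : ℕ) + 1) * l j ≤ weight l :=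
  single_le_sum (f := fun j : Fin r => ((j : ℕ) + 1) * l j) (fun _ _ => Nat.zero_le _)
    (mem_univ j)

lemma sub_single_add_single {l : Fin r → ℕ} {j : Fin r} (h : l j ≠ 0) :
    l - Pi.single j 1 + Pi.single j 1 = l := by
  funext k
  by_cases hk : k = j
  · subst hk; simp; omega
  · simp [hk]

lemma weight_sub_single {l : Fin r → ℕ} {j : Fin r} (h : l j ≠ 0) :
    weight (l - Pi.single j 1) = weight l - ((j : ℕ) + 1) := by
  have := weight_add (l - Pi.single j 1) (Pi.single j 1)
  rw [sub_single_add_single h, weight_single] at this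
  omega

lemma numParts_eq_one_iff {l : Fin r → ℕ} : numParts l = 1 ↔ ∃ j, l = Pi.single j 1 := by
  refine ⟨fun h => ?_, fun ⟨j, hj⟩ => hj ▸ numParts_single j 1⟩
  obtain ⟨j, -, hj⟩ := exists_ne_zero_of_sum_ne_zero (h.symm ▸ one_ne_zero : numParts l ≠ 0)
  have hsum := numParts_add (l - Pi.single j 1) (Pi.single j 1)
  rw [sub_single_add_single hj, numParts_single, h, right_eq_add, numParts_eq_zero_iff] at hsum
  exact ⟨j, by rw [← sub_single_add_single hj, hsum, zero_add]⟩

lemma prod_factorial_add_single (l : Fin r → ℕ) (j : Fin r) :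
    ∏ k, ((l + Pi.single j 1 : Fin r → ℕ) k)! = (l j + 1) * ∏ k, (l k)! := by
  rw [Fintype.prod_eq_mul_prod_compl j, Fintype.prod_eq_mul_prod_compl j (fun k => (l k)!),
    ← mul_assoc]
  congr 1
  · simp [Nat.factorial_succ]
  · refine prod_congr rfl fun k hk => ?_
    rw [Pi.add_apply, Pi.single_eq_of_ne (by simpa using hk), add_zero]

/-- The entries of a tuple of weight `n` are at most `n`, so the box `range (n + 1)` loses
nothing. -/
def tuplesOfWeight (r n : ℕ) : Finset (Fin r → ℕ) :=
  (Fintype.piFinset fun _ => range (n + 1)).filter (weight · = n)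

lemma mem_tuplesOfWeight {n : ℕ} {l : Fin r → ℕ} :
    l ∈ tuplesOfWeight r n ↔ weight l = n := by
  refine ⟨fun h => (mem_filter.1 h).2,
    fun h => mem_filter.2 ⟨Fintype.mem_piFinset.2 fun j => ?_, h⟩⟩
  have := mul_le_weight l j
  rw [mem_range]
  nlinarith

variable {M : Type*} [AddCommMonoid M]

lemma sum_tuplesOfWeight_filter_ne_zero (f : (Fin r → ℕ) → M) {n : ℕ} {j : Fin r}
    (hj : (j : ℕ) + 1 ≤ n) :
    ∑ l ∈ tuplesOfWeight r n with l j ≠ 0, f l =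
      ∑ l ∈ tuplesOfWeight r (n - ((j : ℕ) + 1)), f (l + Pi.single j 1) := by
  refine sum_nbij' (· - Pi.single j 1) (· + Pi.single j 1) (fun l hl => ?_) (fun l hl => ?_)
    (fun l hl => sub_single_add_single (mem_filter.1 hl).2) (fun l _ => add_tsub_cancel_right l _)
    (fun l hl => by rw [sub_single_add_single (mem_filter.1 hl).2])
  · obtain ⟨hl, hj⟩ := mem_filter.1 hl
    rw [mem_tuplesOfWeight, weight_sub_single hj, mem_tuplesOfWeight.1 hl]
  · rw [mem_tuplesOfWeight] at hl
    simp only [mem_filter, mem_tuplesOfWeight, weight_add, weight_single, hl, Pi.add_apply,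
      Pi.single_eq_same]
    omega

lemma sum_tuplesOfWeight_filter_numParts_eq_one (f : (Fin r → ℕ) → M) (n : ℕ) :
    ∑ l ∈ tuplesOfWeight r n with numParts l = 1, f l =
      ∑ j : Fin r with j.val + 1 = n, f (Pi.single j 1) := by
  symm
  refine sum_bij (fun j _ => Pi.single j 1) (fun j hj => ?_)
    (fun i _ j _ h => by simpa [Pi.single_apply] using congr_fun h i) (fun l hl => ?_)
    (fun _ _ => rfl)
  · simpa [mem_tuplesOfWeight, weight_single, numParts_single] using hj
  · obtain ⟨hl, h1⟩ := mem_filter.1 hl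
    obtain ⟨j, rfl⟩ := numParts_eq_one_iff.1 h1
    rw [mem_tuplesOfWeight, weight_single, mul_one] at hl
    exact ⟨j, by simpa using hl, rfl⟩

/-- `n` times the coefficient of `e^l` in Waring's formula, where `n = weight l`. -/
def waringCoeff (l : Fin r → ℕ) : ℚ :=
  weight l * ((-1) ^ (weight l + numParts l) * ((numParts l - 1)! : ℚ) / ∏ j, ((l j)! : ℚ))

lemma waringCoeff_single (j : Fin r) :
    waringCoeff (Pi.single j 1) = (-1) ^ ((j : ℕ) + 1 + 1) * ((j : ℕ) + 1) := by
  have hprod : ∏ k, (((Pi.single j 1 : Fin r → ℕ) k)! : ℚ) = 1 :=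
    prod_eq_one fun k _ => by rw [Pi.single_apply]; split_ifs <;> simp
  rw [waringCoeff, weight_single, numParts_single, hprod]
  push_cast
  ring

lemma neg_one_pow_mul_waringCoeff_sub_single {l : Fin r → ℕ} {j : Fin r} (h : l j ≠ 0) :
    (-1) ^ (j : ℕ) * waringCoeff (l - Pi.single j 1) =
      (-1) ^ (weight l + numParts l) * ((weight l : ℚ) - ((j : ℕ) + 1)) * l j *
        ((numParts l - 2)! : ℚ) / ∏ k, ((l k)! : ℚ) := by
  obtain ⟨l, rfl⟩ : ∃ l' : Fin r → ℕ, l = l' + Pi.single j 1 :=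
    ⟨_, (sub_single_add_single h).symm⟩
  have hfac : ∏ k, (((l + Pi.single j 1 : Fin r → ℕ) k)! : ℚ) =
      (l j + 1) * ∏ k, ((l k)! : ℚ) := by
    exact_mod_cast prod_factorial_add_single l j
  have hfac_ne : ∏ k, ((l k)! : ℚ) ≠ 0 := prod_ne_zero_iff.2 fun k _ => by positivity
  rw [add_tsub_cancel_right, waringCoeff, hfac, weight_add, numParts_add, weight_single,
    numParts_single, show numParts l + 1 - 2 = numParts l - 1 by omega]
  simp only [Pi.add_apply, Pi.single_eq_same]
  push_cast
  field_simp
  ring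

lemma waringCoeff_sub_sum_waringCoeff_sub_single (l : Fin r → ℕ) :
    waringCoeff l - ∑ j with l j ≠ 0, (-1) ^ (j : ℕ) * waringCoeff (l - Pi.single j 1) =
      if numParts l = 1 then waringCoeff l else 0 := by
  set n := weight l
  set m := numParts l
  set c : ℚ := (-1) ^ (n + m) / ∏ k, ((l k)! : ℚ)
  -- every term carries the factor `c (m - 2)!`, and `∑ (n - (j + 1)) l_j = n m - n`
  have hsum : ∑ j with l j ≠ 0, (-1) ^ (j : ℕ) * waringCoeff (l - Pi.single j 1) =
      c * (m - 2)! * (n * m - n) := by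
    have hn : ∑ j : Fin r, ((j : ℚ) + 1) * l j = n := by simp [n, weight]
    have hm : ∑ j : Fin r, (l j : ℚ) = m := by simp [m, numParts]
    rw [sum_congr rfl fun j hj => neg_one_pow_mul_waringCoeff_sub_single (mem_filter.1 hj).2,
      sum_filter_of_ne fun j _ h => by contrapose! h; simp [h]]
    calc _ = ∑ j, c * (m - 2)! * (n * l j - ((j : ℚ) + 1) * l j) :=
          sum_congr rfl fun j _ => by simp only [c]; ring
      _ = c * (m - 2)! * (n * m - n) := by rw [← mul_sum, sum_sub_distrib, ← mul_sum, hn, hm]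
  have hcoeff : waringCoeff l = c * (m - 1)! * n := by simp only [waringCoeff, c]; ring
  rw [hsum, hcoeff]
  rcases Nat.lt_trichotomy m 1 with hm0 | hm1 | hm2
  · have hl : l = 0 := numParts_eq_zero_iff.1 (by omega)
    have hn : n = 0 := by simp [n, hl, weight]
    simp [hn, hm0.ne]
  · simp [hm1]
  · obtain ⟨k, hk⟩ : ∃ k, m = k + 2 := ⟨m - 2, by omega⟩
    rw [if_neg hm2.ne', hk, Nat.add_sub_cancel, show k + 2 - 1 = k + 1 by omega,
      Nat.factorial_succ]
    push_cast
    ring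

lemma sum_antidiagonal_filter_eq_sum_fin (F : ℕ → ℕ → M) (hF0 : ∀ i, F i 0 = 0)
    (hFr : ∀ i k, r < i → F i k = 0) (n : ℕ) :
    ∑ a ∈ antidiagonal n with a.1 ∈ Set.Ioo 0 n, F a.1 a.2 =
      ∑ j : Fin r, F (j + 1) (n - (j + 1)) := by
  set G : ℕ → M := fun k => F (k + 1) (n - (k + 1))
  have hleft :
      ∑ a ∈ antidiagonal n with a.1 ∈ Set.Ioo 0 n, F a.1 a.2 = ∑ k ∈ range n, G k := by
    rw [sum_filter, Nat.sum_antidiagonal_eq_sum_range_succ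
      (fun i k => if i ∈ Set.Ioo 0 n then F i k else 0), sum_range_succ']
    simp only [Set.mem_Ioo, lt_irrefl, false_and, if_false, add_zero]
    refine sum_congr rfl fun k hk => ?_
    rcases Nat.lt_or_ge (k + 1) n with hk' | hk'
    · simp [G, hk']
    · simp [G, show n - (k + 1) = 0 by omega, hF0]
  have hG : ∀ k, min n r ≤ k → G k = 0 := fun k hk => by
    rcases Nat.lt_or_ge k n with h | h
    · exact hFr _ _ (by omega)
    · simp [G, show n - (k + 1) = 0 by omega, hF0]
  have htrunc : ∀ N, min n r ≤ N → ∑ k ∈ range N, G k = ∑ k ∈ range (min n r), G k :=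
    fun N hN =>
      (sum_subset (range_subset_range.2 hN) fun k _ hk => hG k (by simp at hk; omega)).symm
  rw [hleft, Fin.sum_univ_eq_sum_range G, htrunc n (min_le_left n r), htrunc r (min_le_right n r)]

lemma sum_fin_filter_succ_eq (g : ℕ → M) {n : ℕ} (hn : 1 ≤ n) (hg : r < n → g n = 0) :
    ∑ j : Fin r with j.val + 1 = n, g (j.val + 1) = g n := by
  by_cases hnr : n ≤ r
  · rw [sum_eq_single_of_mem ⟨n - 1, by omega⟩ (by simp; omega) fun j hj hne => ?_]
    · exact congrArg g (by simp; omega)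
    · exact absurd (Fin.ext (by simp at hj ⊢; omega)) hne
  · rw [hg (by omega), sum_eq_zero fun j hj => absurd (mem_filter.1 hj).2 (by omega)]

section CommMonoid

variable {A : Type*} [CommMonoid A] (e : ℕ → A)

def powProd (l : Fin r → ℕ) : A := ∏ j : Fin r, e ((j : ℕ) + 1) ^ l j

lemma powProd_add_single (l : Fin r → ℕ) (j : Fin r) :
    powProd e (l + Pi.single j 1) = e ((j : ℕ) + 1) * powProd e l := by
  simp only [powProd, Pi.add_apply, pow_add, prod_mul_distrib]
  rw [mul_comm, prod_eq_single j (fun k _ hk => by simp [hk]) (by simp)]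
  simp

lemma powProd_single (j : Fin r) : powProd e (Pi.single j 1) = e ((j : ℕ) + 1) := by
  simpa [powProd] using powProd_add_single e 0 j

end CommMonoid

section Algebra

variable {A : Type*} [CommRing A] [Algebra ℚ A] (e : ℕ → A)

/-- `n` times the right-hand side of Waring's formula, for an arbitrary sequence `e`. -/
def waringSum (r n : ℕ) : A :=
  ∑ l ∈ tuplesOfWeight r n, algebraMap ℚ A (waringCoeff l) * powProd e l

lemma waringSum_zero : waringSum e r 0 = 0 :=
  sum_eq_zero fun l hl => by simp [waringCoeff, mem_tuplesOfWeight.1 hl]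

lemma sum_neg_one_pow_mul_waringSum (n : ℕ) :
    ∑ j : Fin r,
        (-1) ^ ((j : ℕ) + 1) * e ((j : ℕ) + 1) * waringSum e r (n - ((j : ℕ) + 1)) =
      -∑ l ∈ tuplesOfWeight r n,
        algebraMap ℚ A (∑ j with l j ≠ 0, (-1) ^ (j : ℕ) * waringCoeff (l - Pi.single j 1)) *
          powProd e l := by
  simp only [map_sum, sum_mul]
  rw [sum_comm' (t' := univ) (s' := fun j => (tuplesOfWeight r n).filter (· j ≠ 0))
    (by simp [and_comm]), ← sum_neg_distrib]
  refine sum_congr rfl fun j _ => ?_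
  by_cases hj : (j : ℕ) + 1 ≤ n
  · rw [sum_tuplesOfWeight_filter_ne_zero _ hj, waringSum, mul_sum, ← sum_neg_distrib]
    refine sum_congr rfl fun l _ => ?_
    rw [add_tsub_cancel_right, powProd_add_single, map_mul, map_pow, map_neg, map_one]
    ring
  · rw [Nat.sub_eq_zero_of_le (by omega), waringSum_zero, mul_zero, filter_eq_empty_iff.2,
      sum_empty, neg_zero]
    intro l hl hlj
    have := mul_le_weight l j
    rw [mem_tuplesOfWeight.1 hl] at this
    exact hj (le_trans (Nat.le_mul_of_pos_right _ (Nat.pos_of_ne_zero hlj)) this)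

lemma sum_tuplesOfWeight_numParts_eq_one (he : ∀ i, r < i → e i = 0) {n : ℕ} (hn : 1 ≤ n) :
    ∑ l ∈ tuplesOfWeight r n with numParts l = 1,
        algebraMap ℚ A (waringCoeff l) * powProd e l = (-1) ^ (n + 1) * n * e n := by
  rw [sum_tuplesOfWeight_filter_numParts_eq_one,
    ← sum_fin_filter_succ_eq (fun i => (-1) ^ (i + 1) * (i : A) * e i) hn
      fun h => by simp [he n h]]
  refine sum_congr rfl fun j _ => ?_
  rw [waringCoeff_single, powProd_single]
  simp

theorem waringSum_eq_sub_sum (he : ∀ i, r < i → e i = 0) {n : ℕ} (hn : 0 < n) :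
    waringSum e r n = (-1) ^ (n + 1) * n * e n -
      ∑ a ∈ antidiagonal n with a.1 ∈ Set.Ioo 0 n,
        (-1) ^ a.1 * e a.1 * waringSum e r a.2 := by
  rw [eq_sub_iff_add_eq, sum_antidiagonal_filter_eq_sum_fin
      (fun i k => (-1) ^ i * e i * waringSum e r k) (fun _ => by rw [waringSum_zero, mul_zero])
      (fun i _ hi => by rw [he i hi, mul_zero, zero_mul]),
    sum_neg_one_pow_mul_waringSum, waringSum, ← sub_eq_add_neg, ← sum_sub_distrib,
    ← sum_tuplesOfWeight_numParts_eq_one e he hn, sum_filter]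
  refine sum_congr rfl fun l _ => ?_
  rw [← sub_mul, ← map_sub, waringCoeff_sub_sum_waringCoeff_sub_single]
  split_ifs <;> simp

end Algebra

theorem psum_eq_waringSum (r : ℕ) {n : ℕ} (hn : 1 ≤ n) :
    psum (Fin r) ℚ n = waringSum (esymm (Fin r) ℚ) r n := by
  induction n using Nat.strong_induction_on with
  | _ n ih =>
    rw [psum_eq_mul_esymm_sub_sum _ _ n hn,
      waringSum_eq_sub_sum _ (fun i hi => esymm_eq_zero_of_card_lt _ _ (by simpa using hi)) hn]
    refine congrArg _ (sum_congr rfl fun a ha => ?_)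
    obtain ⟨hsum, hpos, hlt⟩ := by simpa using ha
    rw [ih a.2 (by omega) (by omega)]

lemma sum_filter_fin_eq_sum_tuplesOfWeight (f : (Fin r → ℕ) → M) (n : ℕ) :
    ∑ l : Fin r → Fin (n + 1) with weight (fun j => (l j : ℕ)) = n, f (fun j => l j) =
      ∑ l ∈ tuplesOfWeight r n, f l := by
  refine sum_bij (fun l _ j => l j) (fun l hl => mem_tuplesOfWeight.2 (mem_filter.1 hl).2)
    (fun l _ l' _ h => funext fun j => Fin.ext (congr_fun h j)) (fun l hl => ?_) (fun _ _ => rfl)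
  have hle : ∀ j, l j < n + 1 := fun j => by
    have := mul_le_weight l j
    rw [mem_tuplesOfWeight.1 hl] at this
    nlinarith
  exact ⟨fun j => ⟨l j, hle j⟩, mem_filter.2 ⟨mem_univ _, mem_tuplesOfWeight.1 hl⟩, rfl⟩

end Waring

/-- **Waring's formula**: for `n ≥ 1`, the power sum `p_n = q₁ⁿ + ⋯ + q_rⁿ` in the
polynomial ring `ℚ[q₁,…,q_r]` equals
`n · Σ (-1)^{n + l₁+⋯+l_r} (l₁+⋯+l_r - 1)!/(l₁!⋯l_r!) e₁^{l₁} ⋯ e_r^{l_r}`,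
summed over all tuples of nonnegative integers with `l₁ + 2l₂ + ⋯ + r·l_r = n`
(each such `l_j` necessarily satisfies `l_j ≤ n`, so we may sum over `Fin r → Fin (n+1)`). -/
theorem waring_formula (r n : ℕ) (hn : 1 ≤ n) :
    psum (Fin r) ℚ n =
      (n : MvPolynomial (Fin r) ℚ) *
        ∑ l ∈ Finset.univ.filter
            (fun l : Fin r → Fin (n + 1) => ∑ j : Fin r, ((j : ℕ) + 1) * (l j : ℕ) = n),
          C ((-1 : ℚ) ^ (n + ∑ j : Fin r, (l j : ℕ)) *
              (Nat.factorial (∑ j : Fin r, (l j : ℕ) - 1) : ℚ) / ∏ j : Fin r, (Nat.factorial (l j) : ℚ)) *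
            ∏ j : Fin r, esymm (Fin r) ℚ ((j : ℕ) + 1) ^ (l j : ℕ) := by
  rw [Waring.psum_eq_waringSum r hn, Waring.waringSum,
    ← Waring.sum_filter_fin_eq_sum_tuplesOfWeight, mul_sum]
  refine sum_congr rfl fun l hl => ?_
  have hw : Waring.weight (fun j => (l j : ℕ)) = n := (mem_filter.1 hl).2
  rw [Waring.waringCoeff, hw, algebraMap_eq, map_mul, map_natCast, mul_assoc]
  rfl
end

section
/- Define W_{n+1}(x₁,…,x_r) as the polynomial given by Waring's formula so that W_{n+1}(e₁,…,e_r) = (1/(n+1))·Σᵢ qᵢ^{n+1}. Then the partial derivative ∂W_{n+1}/∂x_i evaluated at (e₁,…,e_r) equals (-1)^n y_{n+1-i}, where y_j = (-1)^j h_j is the j-th complete homogeneous symmetric polynomial up to sign, for 1 ≤ i ≤ r. -/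
/-!
Differentiating `W(e₁,…,e_r) = p_{n+1}/(n+1)` with respect to `q_k`, and using
`∂e_{j+1}/∂q_k = e_j(q̂_k)` (the elementary symmetric polynomial in all variables but `q_k`),
shows that `u_j = (∂W/∂x_{j+1})(e)` solves the linear system `∑_j e_j(q̂_k) u_j = q_k^n`,
`k = 1, …, r`.

The signed complete homogeneous polynomials solve the same system. With
`E_s(t) = ∑ (-1)^m e_m(s) t^m = ∏_{i ∈ s} (1 - q_i t)` and `H_s(t) = ∑ h_m(s) t^m`, adding a
variable `a` to `s` multiplies `E_s` by `1 - q_a t` and `H_s` by `1/(1 - q_a t)`, so `E_s H_s = 1`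
and `E_{q̂_k} H = 1/(1 - q_k t)`; the coefficient of `t^n` is the `k`-th equation.

Finally `E_{q̂_k} = E/(1 - q_k t)` writes `(e_j(q̂_k))_{k,j}` as the Vandermonde matrix of the
`-q_k` times the unitriangular matrix `(e_{j-i})_{i,j}`, so its determinant is nonzero and the
system has only one solution.
-/

theorem Multiset.esymm_cons {R : Type*} [CommSemiring R] (a : R) (s : Multiset R) (n : ℕ) :
    (a ::ₘ s).esymm (n + 1) = s.esymm (n + 1) + a * s.esymm n := by
  simp [Multiset.esymm, Multiset.powersetCard_cons, Multiset.sum_map_mul_left]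

theorem neg_one_pow_add_mul_neg_one_pow {R : Type*} [Monoid R] [HasDistribNeg R] (j d : ℕ) :
    (-1 : R) ^ (j + d) * (-1) ^ d = (-1) ^ j := by
  rw [pow_add, mul_assoc, ← pow_add, ← two_mul, pow_mul, neg_one_sq, one_pow, mul_one]

namespace PowerSeries

variable {R : Type*} [CommRing R]

theorem mk_pow_mul_one_sub_C_mul_X (a : R) : mk (a ^ ·) * (1 - C a * X) = 1 := by
  simpa [rescale_mk, rescale_X] using congrArg (rescale a) (mk_one_mul_one_sub_eq_one R)

theorem coeff_succ_one_sub_C_mul_X_mul (a : R) (f : PowerSeries R) (n : ℕ) :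
    coeff (n + 1) ((1 - C a * X) * f) = coeff (n + 1) f - a * coeff n f := by
  simp [sub_mul, mul_assoc, coeff_succ_X_mul]

end PowerSeries

namespace MvPolynomial

open Finset

section Semiring

variable {σ R : Type*} [CommSemiring R]

theorem pderiv_aeval {τ : Type*} [Fintype τ] (f : τ → MvPolynomial σ R) (k : σ)
    (p : MvPolynomial τ R) :
    pderiv k (aeval f p) = ∑ j, aeval f (pderiv j p) * pderiv k (f j) := by
  classical
  induction p using MvPolynomial.induction_on with
  | C a => simp
  | add p q hp hq => simp only [map_add, hp, hq, add_mul, sum_add_distrib]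
  | mul_X p j hp =>
    rw [map_mul, aeval_X, pderiv_mul, hp]
    simp only [pderiv_mul, pderiv_X, Pi.single_apply, map_add, map_mul, aeval_X, mul_ite, mul_one,
      mul_zero, apply_ite (aeval f), map_zero, ite_mul, zero_mul, add_mul, sum_add_distrib,
      sum_ite_eq, mem_univ, if_true, sum_mul]
    exact congrArg (· + _) (sum_congr rfl fun _ _ => mul_right_comm _ _ _)

theorem pderiv_psum_succ [DecidableEq σ] [Fintype σ] (k : σ) (n : ℕ) :
    pderiv k (psum σ R (n + 1)) = (n + 1 : MvPolynomial σ R) * X k ^ n := by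
  simp [psum, pderiv_X, Pi.single_apply]

noncomputable def esymmOn (s : Finset σ) (n : ℕ) : MvPolynomial σ R := (s.val.map X).esymm n

theorem esymm_eq_esymmOn_univ [Fintype σ] (n : ℕ) : esymm σ R n = esymmOn univ n :=
  congrFun (esymm_eq_multiset_esymm σ R) n

@[simp] theorem esymmOn_zero (s : Finset σ) : esymmOn s 0 = (1 : MvPolynomial σ R) := by
  simp [esymmOn, Multiset.esymm]

theorem esymmOn_eq_zero_of_card_lt {s : Finset σ} {n : ℕ} (h : #s < n) :
    esymmOn s n = (0 : MvPolynomial σ R) := by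
  simp [esymmOn, Multiset.esymm,
    Multiset.powersetCard_eq_empty n (s := s.val.map X) (by simpa using h)]

theorem esymmOn_insert [DecidableEq σ] {a : σ} {s : Finset σ} (ha : a ∉ s) (n : ℕ) :
    esymmOn (insert a s) (n + 1) =
      esymmOn s (n + 1) + X a * (esymmOn s n : MvPolynomial σ R) := by
  simp only [esymmOn, insert_val_of_notMem ha, Multiset.map_cons, Multiset.esymm_cons]

theorem pderiv_esymmOn_of_notMem {k : σ} {s : Finset σ} (hk : k ∉ s) (n : ℕ) :
    pderiv k (esymmOn s n : MvPolynomial σ R) = 0 := by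
  classical
  induction s using Finset.induction_on generalizing n with
  | empty =>
    cases n with
    | zero => simp
    | succ n => rw [esymmOn_eq_zero_of_card_lt (by simp), map_zero]
  | insert a s ha ih =>
    rw [mem_insert, not_or] at hk
    cases n with
    | zero => simp
    | succ n => simp [esymmOn_insert ha, ih hk.2, pderiv_X_of_ne (Ne.symm hk.1)]

theorem pderiv_esymmOn_succ [DecidableEq σ] {k : σ} {s : Finset σ} (hk : k ∈ s) (n : ℕ) :
    pderiv k (esymmOn s (n + 1) : MvPolynomial σ R) = esymmOn (s.erase k) n := by
  conv_lhs => rw [← insert_erase hk, esymmOn_insert (notMem_erase k s)]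
  simp [pderiv_esymmOn_of_notMem (notMem_erase k s)]

theorem pderiv_esymm_succ [DecidableEq σ] [Fintype σ] (k : σ) (n : ℕ) :
    pderiv k (esymm σ R (n + 1)) = esymmOn (univ.erase k) n := by
  rw [esymm_eq_esymmOn_univ]
  exact pderiv_esymmOn_succ (mem_univ k) n

variable [DecidableEq σ]

noncomputable def hsymmOn (s : Finset σ) (n : ℕ) : MvPolynomial σ R :=
  ∑ m ∈ s.sym n, (m.1.map X).prod

theorem hsymm_eq_hsymmOn_univ [Fintype σ] (n : ℕ) : hsymm σ R n = hsymmOn univ n := by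
  simp [hsymm, hsymmOn, sym_univ]

@[simp] theorem hsymmOn_zero (s : Finset σ) : hsymmOn s 0 = (1 : MvPolynomial σ R) := by
  simp [hsymmOn, sym_zero]; rfl

theorem hsymmOn_insert {a : σ} {s : Finset σ} (ha : a ∉ s) (n : ℕ) :
    hsymmOn (insert a s) (n + 1) =
      hsymmOn s (n + 1) + X a * (hsymmOn (insert a s) n : MvPolynomial σ R) := by
  have avoiding : {m ∈ (insert a s).sym (n + 1) | a ∉ m} = s.sym (n + 1) := by
    ext m
    simp only [mem_filter, mem_sym_iff, mem_insert]
    exact ⟨fun ⟨h, ham⟩ b hb => (h b hb).resolve_left (by rintro rfl; exact ham hb),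
      fun h => ⟨fun b hb => Or.inr (h b hb), fun ham => ha (h a ham)⟩⟩
  have containing :
      {m ∈ (insert a s).sym (n + 1) | a ∈ m} = ((insert a s).sym n).image (Sym.cons a) := by
    ext m
    simp only [mem_filter, mem_image, mem_sym_iff]
    constructor
    · rintro ⟨h, ham⟩
      refine ⟨m.erase a ham, fun b hb => h b ?_, Sym.cons_erase ham⟩
      rw [← Sym.mem_coe, Sym.coe_erase] at hb
      exact Multiset.mem_of_mem_erase hb
    · rintro ⟨m, h, rfl⟩
      refine ⟨fun b hb => ?_, Sym.mem_cons_self a m⟩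
      rcases Sym.mem_cons.1 hb with rfl | hb
      · exact mem_insert_self b s
      · exact h b hb
  rw [hsymmOn, ← sum_filter_not_add_sum_filter _ (a ∈ ·), avoiding, containing,
    sum_image fun _ _ _ _ h => (Sym.cons_inj_right a _ _).1 h]
  simp [hsymmOn, mul_sum, Sym.coe_cons]

end Semiring

section Ring

variable {σ R : Type*} [CommRing R] [DecidableEq σ]

noncomputable def esymmSeries (s : Finset σ) : PowerSeries (MvPolynomial σ R) :=
  PowerSeries.mk fun n => (-1) ^ n * esymmOn s n

noncomputable def hsymmSeries (s : Finset σ) : PowerSeries (MvPolynomial σ R) :=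
  PowerSeries.mk (hsymmOn s)

theorem esymmSeries_insert {a : σ} {s : Finset σ} (ha : a ∉ s) :
    (esymmSeries (insert a s) : PowerSeries (MvPolynomial σ R)) =
      (1 - PowerSeries.C (X a) * PowerSeries.X) * esymmSeries s := by
  ext (_ | n) : 1
  · simp [esymmSeries]
  · rw [PowerSeries.coeff_succ_one_sub_C_mul_X_mul]
    simp only [esymmSeries, PowerSeries.coeff_mk, esymmOn_insert ha]
    ring

theorem one_sub_C_mul_X_mul_hsymmSeries_insert {a : σ} {s : Finset σ} (ha : a ∉ s) :
    (1 - PowerSeries.C (X a) * PowerSeries.X) * hsymmSeries (insert a s) =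
      (hsymmSeries s : PowerSeries (MvPolynomial σ R)) := by
  ext (_ | n) : 1
  · simp [hsymmSeries]
  · rw [PowerSeries.coeff_succ_one_sub_C_mul_X_mul]
    simp only [hsymmSeries, PowerSeries.coeff_mk, hsymmOn_insert ha]
    ring

theorem esymmSeries_mul_hsymmSeries (s : Finset σ) :
    esymmSeries s * hsymmSeries s = (1 : PowerSeries (MvPolynomial σ R)) := by
  induction s using Finset.induction_on with
  | empty =>
    have hE : esymmSeries (∅ : Finset σ) = (1 : PowerSeries (MvPolynomial σ R)) := by
      ext (_ | n) : 1
      · simp [esymmSeries]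
      · simp [esymmSeries, esymmOn_eq_zero_of_card_lt (by simp : #(∅ : Finset σ) < n + 1)]
    have hH : hsymmSeries (∅ : Finset σ) = (1 : PowerSeries (MvPolynomial σ R)) := by
      ext (_ | n) : 1
      · simp [hsymmSeries]
      · simp [hsymmSeries, hsymmOn]
    rw [hE, hH, one_mul]
  | insert a s ha ih =>
    rw [esymmSeries_insert ha, mul_comm (1 - _), mul_assoc,
      one_sub_C_mul_X_mul_hsymmSeries_insert ha, ih]

theorem esymmSeries_erase {k : σ} {s : Finset σ} (hk : k ∈ s) :
    esymmSeries (s.erase k) =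
      PowerSeries.mk (X k ^ ·) * (esymmSeries s : PowerSeries (MvPolynomial σ R)) := by
  conv_rhs => rw [← insert_erase hk, esymmSeries_insert (notMem_erase k s), ← mul_assoc,
    PowerSeries.mk_pow_mul_one_sub_C_mul_X, one_mul]

theorem esymmSeries_erase_mul_hsymmSeries {k : σ} {s : Finset σ} (hk : k ∈ s) :
    esymmSeries (s.erase k) * hsymmSeries s =
      PowerSeries.mk (X k ^ · : ℕ → MvPolynomial σ R) := by
  rw [esymmSeries_erase hk, mul_assoc, esymmSeries_mul_hsymmSeries, mul_one]

variable [Fintype σ]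

theorem sum_range_esymmOn_univ_erase_mul_hsymm (k : σ) (n : ℕ) :
    ∑ j ∈ range (n + 1), (-1) ^ j * esymmOn (univ.erase k) j * hsymm σ R (n - j) = X k ^ n := by
  have h := congrArg (PowerSeries.coeff n)
    (esymmSeries_erase_mul_hsymmSeries (R := R) (mem_univ k))
  rw [PowerSeries.coeff_mul, Nat.sum_antidiagonal_eq_sum_range_succ_mk] at h
  simpa [esymmSeries, hsymmSeries, hsymm_eq_hsymmOn_univ] using h

theorem esymmOn_univ_erase_eq_sum (k : σ) (n : ℕ) :
    esymmOn (univ.erase k) n = ∑ j ∈ range (n + 1), (-X k) ^ j * esymm σ R (n - j) := by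
  have h := congrArg (PowerSeries.coeff n) (esymmSeries_erase (R := R) (mem_univ k))
  rw [PowerSeries.coeff_mul, Nat.sum_antidiagonal_eq_sum_range_succ_mk] at h
  simp only [esymmSeries, PowerSeries.coeff_mk, ← esymm_eq_esymmOn_univ] at h
  calc esymmOn (univ.erase k) n = (-1) ^ n * ((-1) ^ n * esymmOn (univ.erase k) n) := by
        rw [← mul_assoc, ← mul_pow, neg_one_mul, neg_neg, one_pow, one_mul]
    _ = _ := by
        rw [h, mul_sum]
        refine sum_congr rfl fun j hj => ?_
        obtain ⟨d, rfl⟩ := Nat.exists_eq_add_of_le (mem_range_succ_iff.1 hj)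
        rw [Nat.add_sub_cancel_left, neg_pow (X k : MvPolynomial σ R),
          ← neg_one_pow_add_mul_neg_one_pow j d]
        ring

end Ring

variable {R : Type*} [CommRing R]

theorem det_esymmOn_univ_erase_ne_zero [IsDomain R] (r : ℕ) :
    (Matrix.of fun k j : Fin r => (esymmOn (univ.erase k) j : MvPolynomial (Fin r) R)).det ≠ 0 := by
  let T : Matrix (Fin r) (Fin r) (MvPolynomial (Fin r) R) :=
    Matrix.of fun i j => if i ≤ j then esymm (Fin r) R (j - i) else 0
  have hfactor :
      Matrix.of (fun k j : Fin r => (esymmOn (univ.erase k) j : MvPolynomial (Fin r) R)) =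
        Matrix.vandermonde (fun k => -X k) * T := by
    ext k j : 1
    simp only [Matrix.mul_apply, Matrix.vandermonde_apply, Matrix.of_apply, T,
      esymmOn_univ_erase_eq_sum, mul_ite, mul_zero, Fin.le_iff_val_le_val]
    rw [Fin.sum_univ_eq_sum_range
        (fun i => if i ≤ (j : ℕ) then (-X k) ^ i * esymm (Fin r) R (j - i) else 0),
      ← sum_filter]
    congr 1
    ext i
    simp only [mem_range, mem_filter]
    omega
  have hT : T.det = 1 := by
    rw [Matrix.det_of_isUpperTriangular (M := T) fun i j hji => by
      simp [T, not_le.2 (show j < i from hji)]]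
    simp [T]
  rw [hfactor, Matrix.det_mul, hT, mul_one, Matrix.det_vandermonde_ne_zero_iff]
  exact fun a b hab => X_injective (neg_injective hab)

theorem sum_esymmOn_univ_erase_mul_signed_hsymm {r n : ℕ} (hr : r ≤ n + 1) (k : Fin r) :
    ∑ j : Fin r, esymmOn (univ.erase k) (j : ℕ) * ((-1) ^ n *
      ((-1) ^ (n + 1 - ((j : ℕ) + 1)) * hsymm (Fin r) R (n + 1 - ((j : ℕ) + 1)))) = X k ^ n := by
  have vanish : ∀ j ∈ range (n + 1), j ∉ range r → esymmOn (univ.erase k) j * ((-1) ^ n *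
      ((-1) ^ (n + 1 - (j + 1)) * hsymm (Fin r) R (n + 1 - (j + 1)))) = 0 := by
    intro j _ hj
    rw [esymmOn_eq_zero_of_card_lt, zero_mul]
    rw [mem_range] at hj
    rw [card_erase_of_mem (mem_univ k), card_univ, Fintype.card_fin]
    have := k.pos
    omega
  rw [Fin.sum_univ_eq_sum_range (fun j => esymmOn (univ.erase k) j * ((-1) ^ n *
      ((-1) ^ (n + 1 - (j + 1)) * hsymm (Fin r) R (n + 1 - (j + 1))))),
    sum_subset (range_subset_range.2 hr) vanish, ← sum_range_esymmOn_univ_erase_mul_hsymm k n]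
  refine sum_congr rfl fun j hj => ?_
  obtain ⟨d, rfl⟩ := Nat.exists_eq_add_of_le (mem_range_succ_iff.1 hj)
  rw [Nat.add_sub_add_right, Nat.add_sub_cancel_left, ← neg_one_pow_add_mul_neg_one_pow j d]
  ring

end MvPolynomial

open MvPolynomial

/-- If `W ∈ ℚ[x₁,…,x_r]` satisfies `W(e₁,…,e_r) = (1/(n+1)) Σᵢ qᵢ^{n+1}` (such a `W` is
unique since the elementary symmetric polynomials are algebraically independent), then
for each `1 ≤ i ≤ r` the partial derivative satisfies
`(∂W/∂x_i)(e₁,…,e_r) = (-1)^n y_{n+1-i}`, where `y_j = (-1)^j h_j` is the signed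
complete homogeneous symmetric polynomial.  Here the variable `x_{i+1}` (for `i : Fin r`)
is the `(i+1)`-st variable, and we assume `r ≤ n`. -/
theorem pderiv_cohomology_potential (r n : ℕ) (hr : r ≤ n)
    (W : MvPolynomial (Fin r) ℚ)
    (hW : aeval (fun i : Fin r => esymm (Fin r) ℚ ((i : ℕ) + 1)) W =
      C (1 / ((n : ℚ) + 1)) * psum (Fin r) ℚ (n + 1)) (i : Fin r) :
    aeval (fun j : Fin r => esymm (Fin r) ℚ ((j : ℕ) + 1)) (pderiv i W) =
      (-1 : MvPolynomial (Fin r) ℚ) ^ n *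
        ((-1 : MvPolynomial (Fin r) ℚ) ^ (n + 1 - ((i : ℕ) + 1)) *
          hsymm (Fin r) ℚ (n + 1 - ((i : ℕ) + 1))) := by
  set J : Matrix (Fin r) (Fin r) (MvPolynomial (Fin r) ℚ) :=
    Matrix.of fun k j => esymmOn (Finset.univ.erase k) (j : ℕ)
  set u := fun m : Fin r => aeval (fun j : Fin r => esymm (Fin r) ℚ ((j : ℕ) + 1)) (pderiv m W)
  set v := fun m : Fin r => (-1 : MvPolynomial (Fin r) ℚ) ^ n *
    ((-1 : MvPolynomial (Fin r) ℚ) ^ (n + 1 - ((m : ℕ) + 1)) *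
      hsymm (Fin r) ℚ (n + 1 - ((m : ℕ) + 1)))
  have hu : J.mulVec u = fun k => X k ^ n := by
    funext k
    have h := congrArg (pderiv k) hW
    rw [pderiv_aeval, pderiv_C_mul, pderiv_psum_succ, ← mul_assoc,
      show ((n : MvPolynomial (Fin r) ℚ) + 1) = C ((n : ℚ) + 1) by simp, ← C_mul,
      one_div_mul_cancel (by positivity), C_1, one_mul] at h
    simpa [J, u, Matrix.mulVec, dotProduct, pderiv_esymm_succ, mul_comm] using h
  have hv : J.mulVec v = fun k => X k ^ n :=
    funext fun k => sum_esymmOn_univ_erase_mul_signed_hsymm (by omega) k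
  have huv := Matrix.eq_zero_of_mulVec_eq_zero (det_esymmOn_univ_erase_ne_zero r)
    (by rw [Matrix.mulVec_sub, hu, hv, sub_self] : J.mulVec (u - v) = 0)
  exact congrFun (sub_eq_zero.1 huv) i
end

section
/- For k ≥ 2 and n ≥ 1, the numbers L_n = n · Σ over tuples (m₁,…,m_k) of nonnegative integers with m₁ + 2m₂ + ⋯ + k·m_k = n of (m₁+⋯+m_k-1)!/(m₁!⋯m_k!) satisfy the k-th order Lucas recursion L_n = L_{n-1} + L_{n-2} + ⋯ + L_{n-k} for n > k. -/
/-
Write `L_n = n · Σ (|m| - 1)!/m!` over the tuples `m` of weight `Σ (j+1) m_j = n`, where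
`|m| = Σ m_j` and `m! = ∏ m_j!`. Adding one part of size `j + 1` (i.e. `m ↦ m + e_j`) maps the
tuples of weight `n - (j+1)` bijectively onto those of weight `n` with `m_j ≠ 0`, and turns
`(|m| - 1)!/m!` into `m_j (|m| - 2)!/m!`. Hence
`Σ_j L_{n-1-j} = Σ_m (|m| - 2)!/m! · Σ_j (n - j - 1) m_j = Σ_m n (|m| - 1) (|m| - 2)!/m!`.
For `n > k` every tuple of weight `n` has `|m| ≥ 2`, so this is `L_n`.
-/

open Finset

/-- `waringLucas k n = n · Σ (m₁+⋯+m_k-1)!/(m₁!⋯m_k!)`, summed over all tuples of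
nonnegative integers with `m₁ + 2m₂ + ⋯ + k·m_k = n`; this is the paper's `L_n`
(each summand times `n` is an integer, but we work in `ℚ`). -/
def waringLucas (k n : ℕ) : ℚ :=
  (n : ℚ) * ∑ m ∈ Finset.univ.filter
      (fun m : Fin k → Fin (n + 1) => ∑ j : Fin k, ((j : ℕ) + 1) * (m j : ℕ) = n),
    (Nat.factorial ((∑ j : Fin k, (m j : ℕ)) - 1) : ℚ) /
      ∏ j : Fin k, (Nat.factorial (m j) : ℚ)

namespace WaringLucas

variable {k : ℕ}

def weight (m : Fin k → ℕ) : ℕ := ∑ i : Fin k, ((i : ℕ) + 1) * m i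

def tuplesOfWeight (k n : ℕ) : Finset (Fin k → ℕ) :=
  {m ∈ Fintype.piFinset fun _ => range (n + 1) | weight m = n}

def factorialRatio (r : ℕ) (m : Fin k → ℕ) : ℚ :=
  ((∑ i, m i) - r).factorial / ∏ i, ((m i).factorial : ℚ)

lemma le_weight (m : Fin k → ℕ) (i : Fin k) : m i ≤ weight m :=
  calc m i ≤ ((i : ℕ) + 1) * m i := Nat.le_mul_of_pos_left _ i.succ_pos
    _ ≤ weight m := single_le_sum (f := fun i : Fin k => ((i : ℕ) + 1) * m i)
        (fun _ _ => Nat.zero_le _) (mem_univ i)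

lemma weight_le_mul_sum (m : Fin k → ℕ) : weight m ≤ k * ∑ i, m i := by
  rw [weight, mul_sum]
  exact sum_le_sum fun (i : Fin k) _ => Nat.mul_le_mul_right _ i.isLt

lemma weight_add_single (m : Fin k → ℕ) (j : Fin k) :
    weight (m + Pi.single j 1) = weight m + ((j : ℕ) + 1) := by
  simp [weight, mul_add, sum_add_distrib, Pi.single_apply]

lemma mem_tuplesOfWeight {n : ℕ} {m : Fin k → ℕ} :
    m ∈ tuplesOfWeight k n ↔ weight m = n := by
  refine ⟨fun h => (mem_filter.1 h).2, fun h => mem_filter.2 ⟨?_, h⟩⟩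
  exact Fintype.mem_piFinset.2 fun i => mem_range.2 (Nat.lt_succ_of_le (h ▸ le_weight m i))

lemma two_le_sum_of_mem_tuplesOfWeight {n : ℕ} (hn : k < n) {m : Fin k → ℕ}
    (hm : m ∈ tuplesOfWeight k n) : 2 ≤ ∑ i, m i := by
  have := (mem_tuplesOfWeight.1 hm).symm.trans_le (weight_le_mul_sum m)
  by_contra! h
  interval_cases (∑ i, m i) <;> omega

lemma waringLucas_eq_sum (n : ℕ) :
    waringLucas k n = n * ∑ m ∈ tuplesOfWeight k n, factorialRatio 1 m := by
  have val_ofNat : ∀ m ∈ tuplesOfWeight k n, (fun i => (Fin.ofNat (n + 1) (m i) : ℕ)) = m :=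
    fun m hm => funext fun i =>
      Nat.mod_eq_of_lt (Nat.lt_succ_of_le (mem_tuplesOfWeight.1 hm ▸ le_weight m i))
  rw [waringLucas]
  congr 1
  refine sum_nbij' (fun m i => (m i : ℕ)) (fun m i => Fin.ofNat (n + 1) (m i))
    (fun m hm => mem_tuplesOfWeight.2 (mem_filter.1 hm).2)
    (fun m hm => mem_filter.2 ⟨mem_univ _, mem_tuplesOfWeight.1 ((val_ofNat m hm).symm ▸ hm)⟩)
    (fun m _ => by simp) val_ofNat fun m _ => rfl

lemma factorialRatio_one_eq_mul_two {m : Fin k → ℕ} (hm : 2 ≤ ∑ i, m i) :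
    factorialRatio 1 m = (((∑ i, m i : ℕ) : ℚ) - 1) * factorialRatio 2 m := by
  obtain ⟨s, hs⟩ := Nat.exists_eq_add_of_le' hm
  simp only [factorialRatio, hs, Nat.add_sub_cancel, Nat.add_succ_sub_one, Nat.factorial_succ]
  push_cast
  ring

lemma sum_add_single (m : Fin k → ℕ) (j : Fin k) :
    ∑ i, (m + Pi.single j 1 : Fin k → ℕ) i = ∑ i, m i + 1 := by
  simp [sum_add_distrib]

lemma prod_factorial_add_single (m : Fin k → ℕ) (j : Fin k) :
    ∏ i, (((m + Pi.single j 1 : Fin k → ℕ) i).factorial : ℚ) =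
      (m j + 1) * ∏ i, ((m i).factorial : ℚ) := by
  rw [← mul_prod_erase univ _ (mem_univ j),
    ← mul_prod_erase univ (fun i => ((m i).factorial : ℚ)) (mem_univ j),
    prod_congr rfl fun i hi => by
      rw [Pi.add_apply, Pi.single_eq_of_ne (ne_of_mem_erase hi), add_zero]]
  simp [Nat.factorial_succ, mul_assoc]

lemma factorialRatio_one_eq_mul_two_add_single (m : Fin k → ℕ) (j : Fin k) :
    factorialRatio 1 m =
      ((m + Pi.single j 1 : Fin k → ℕ) j : ℚ) * factorialRatio 2 (m + Pi.single j 1) := by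
  have hne : ((m j : ℚ) + 1) ≠ 0 := by positivity
  rw [factorialRatio, factorialRatio, sum_add_single, prod_factorial_add_single,
    Nat.add_sub_add_right]
  simp only [Pi.add_apply, Pi.single_eq_same, Nat.cast_add, Nat.cast_one]
  rw [← mul_div_assoc, mul_div_mul_left _ _ hne]

lemma sub_single_add_single {m : Fin k → ℕ} {j : Fin k} (hj : m j ≠ 0) :
    m - Pi.single j 1 + Pi.single j 1 = m := by
  refine tsub_add_cancel_of_le fun i => ?_
  rcases eq_or_ne i j with rfl | hi
  · simpa [Nat.one_le_iff_ne_zero]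
  · simp [hi]

lemma sum_tuplesOfWeight_sub_succ {n : ℕ} (j : Fin k) (hj : (j : ℕ) + 1 ≤ n) :
    ∑ m ∈ tuplesOfWeight k (n - (j + 1)), factorialRatio 1 m =
      ∑ m ∈ tuplesOfWeight k n, (m j : ℚ) * factorialRatio 2 m := by
  rw [← sum_filter_of_ne (s := tuplesOfWeight k n) (p := fun m => m j ≠ 0)
    fun m _ h hm => h (by simp [hm])]
  simp_rw [factorialRatio_one_eq_mul_two_add_single _ j]
  refine sum_nbij' (· + Pi.single j 1) (· - Pi.single j 1) (fun m hm => ?_) (fun m hm => ?_)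
    (fun m _ => add_tsub_cancel_right m _) (fun m hm => sub_single_add_single (mem_filter.1 hm).2)
    (fun m _ => rfl)
  · simp only [mem_filter, mem_tuplesOfWeight, weight_add_single] at hm ⊢
    refine ⟨by omega, by simp⟩
  · obtain ⟨hm, hmj⟩ := mem_filter.1 hm
    have := weight_add_single (m - Pi.single j 1) j
    rw [sub_single_add_single hmj, mem_tuplesOfWeight.1 hm] at this
    exact mem_tuplesOfWeight.2 (by omega)

lemma sum_sub_succ_mul_of_mem_tuplesOfWeight {n : ℕ} {m : Fin k → ℕ}
    (hm : m ∈ tuplesOfWeight k n) :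
    ∑ j : Fin k, ((n : ℚ) - ((j : ℕ) + 1)) * m j = n * (((∑ i, m i : ℕ) : ℚ) - 1) := by
  have hw : ∑ j : Fin k, (((j : ℕ) : ℚ) + 1) * m j = n := by
    exact_mod_cast mem_tuplesOfWeight.1 hm
  simp only [sub_mul, sum_sub_distrib, ← mul_sum, hw]
  push_cast
  ring

lemma waringLucas_sub_one_sub {n : ℕ} (hn : k < n) (j : Fin k) :
    waringLucas k (n - 1 - j) =
      ((n : ℚ) - ((j : ℕ) + 1)) *
        ∑ m ∈ tuplesOfWeight k n, (m j : ℚ) * factorialRatio 2 m := by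
  have hj : (j : ℕ) + 1 ≤ n := by omega
  rw [Nat.sub_sub, Nat.add_comm 1, waringLucas_eq_sum, sum_tuplesOfWeight_sub_succ j hj,
    Nat.cast_sub hj]
  push_cast
  rfl

end WaringLucas

open WaringLucas in
theorem waringLucas_recursion_general (k : ℕ) :
    ∀ n, k < n → waringLucas k n = ∑ j ∈ Finset.range k, waringLucas k (n - 1 - j) := by
  intro n hn
  calc waringLucas k n
      = n * ∑ m ∈ tuplesOfWeight k n,
          (((∑ i, m i : ℕ) : ℚ) - 1) * factorialRatio 2 m := by
        rw [waringLucas_eq_sum]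
        exact congrArg _ (sum_congr rfl fun m hm =>
          factorialRatio_one_eq_mul_two (two_le_sum_of_mem_tuplesOfWeight hn hm))
    _ = ∑ m ∈ tuplesOfWeight k n,
          (∑ j : Fin k, ((n : ℚ) - ((j : ℕ) + 1)) * m j) * factorialRatio 2 m := by
        rw [mul_sum]
        exact sum_congr rfl fun m hm => by rw [sum_sub_succ_mul_of_mem_tuplesOfWeight hm, mul_assoc]
    _ = ∑ j : Fin k, waringLucas k (n - 1 - j) := by
        simp only [waringLucas_sub_one_sub hn, mul_sum, sum_mul, mul_assoc]
        exact sum_comm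
    _ = ∑ j ∈ range k, waringLucas k (n - 1 - j) :=
        Fin.sum_univ_eq_sum_range (fun j => waringLucas k (n - 1 - j)) k

/-- For `k ≥ 2`, the numbers `L_n = waringLucas k n` satisfy the `k`-th order Lucas
recursion `L_n = L_{n-1} + L_{n-2} + ⋯ + L_{n-k}` for `n > k`. -/
theorem waringLucas_recursion (k : ℕ) (hk : 2 ≤ k) :
    ∀ n, k < n → waringLucas k n = ∑ j ∈ Finset.range k, waringLucas k (n - 1 - j) :=
  waringLucas_recursion_general k
end

section
/- The third-order Lucas numbers given by L_n = n·Σ_{m₁+2m₂+3m₃=n} (m₁+m₂+m₃-1)!/(m₁!m₂!m₃!) have initial values L₁,…,L₈ = 1, 3, 7, 11, 21, 39, 71, 131, and satisfy L_n = L_{n-1} + L_{n-2} + L_{n-3} for n ≥ 4. -/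
open Finset

/-- `tribLucas n = n · Σ_{m₁+2m₂+3m₃=n} (m₁+m₂+m₃-1)!/(m₁!m₂!m₃!)`; this is the paper's
third-order Lucas number `L_n`. -/
def tribLucas (n : ℕ) : ℚ :=
  (n : ℚ) * ∑ m ∈ Finset.univ.filter
      (fun m : Fin 3 → Fin (n + 1) => ∑ j : Fin 3, ((j : ℕ) + 1) * (m j : ℕ) = n),
    (Nat.factorial ((∑ j : Fin 3, (m j : ℕ)) - 1) : ℚ) /
      ∏ j : Fin 3, (Nat.factorial (m j) : ℚ)

/-! Write `|m| = m₁ + m₂ + m₃` and `G m = (|m| - 1)! / ∏ mⱼ!`, and let `T n` be the sum of the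
multinomials `|m|! / ∏ mⱼ!` over `m₁ + 2m₂ + 3m₃ = n`, i.e. the number of compositions of `n`
into parts `1, 2, 3`. Since `(mᵢ + 1) · G (m + eᵢ)` is the multinomial of `m`, summing `mᵢ · G m`
over the solutions of `n` gives `T (n - i)`. Weighting these sums by `1` (using `∑ mᵢ = |m|`)
and by `i` (using `∑ i mᵢ = n`) yields `T n = T (n-1) + T (n-2) + T (n-3)` and
`L n = T (n-1) + 2 T (n-2) + 3 T (n-3)`, so `T` is a Tribonacci sequence and `L` inherits its
recurrence. -/

namespace WeightedComposition

variable {ι : Type*} [Fintype ι]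

def lucasCoeff (m : ι → ℕ) : ℚ :=
  ((∑ i, m i) - 1).factorial / ∏ i, ((m i).factorial : ℚ)

theorem natCast_multinomial (m : ι → ℕ) :
    (Nat.multinomial univ m : ℚ) = (∑ i, m i).factorial / ∏ i, ((m i).factorial : ℚ) := by
  rw [eq_div_iff (by positivity), mul_comm]
  exact_mod_cast Nat.multinomial_spec univ m

theorem sum_mul_lucasCoeff {m : ι → ℕ} (hm : ∑ i, m i ≠ 0) :
    ((∑ i, m i : ℕ) : ℚ) * lucasCoeff m = Nat.multinomial univ m := by
  rw [lucasCoeff, natCast_multinomial, ← mul_div_assoc, ← Nat.mul_factorial_pred hm]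
  push_cast
  ring

variable [DecidableEq ι]

def weightedAntidiagonal (w : ι → ℕ) (n : ℕ) : Finset (ι → ℕ) :=
  (Fintype.piFinset fun _ => range (n + 1)).filter fun m => ∑ i, w i * m i = n

theorem apply_le_of_mem_weightedAntidiagonal {w : ι → ℕ} {n : ℕ} {m : ι → ℕ}
    (hm : m ∈ weightedAntidiagonal w n) (i : ι) : m i ≤ n :=
  Nat.le_of_lt_succ (mem_range.1 (Fintype.mem_piFinset.1 (mem_filter.1 hm).1 i))

theorem mem_weightedAntidiagonal {w : ι → ℕ} (hw : ∀ i, 0 < w i) {n : ℕ} {m : ι → ℕ} :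
    m ∈ weightedAntidiagonal w n ↔ ∑ i, w i * m i = n := by
  refine ⟨fun h => (mem_filter.1 h).2, fun h => mem_filter.2 ⟨?_, h⟩⟩
  refine Fintype.mem_piFinset.2 fun i => mem_range.2 (Nat.lt_succ_of_le ?_)
  calc m i ≤ w i * m i := Nat.le_mul_of_pos_left _ (hw i)
    _ ≤ ∑ j, w j * m j := single_le_sum (f := fun j => w j * m j) (by simp) (mem_univ i)
    _ = n := h

theorem weightedSum_add_single (w m : ι → ℕ) (i : ι) :
    ∑ j, w j * (m + Pi.single i 1 : ι → ℕ) j = ∑ j, w j * m j + w i := by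
  simp [mul_add, sum_add_distrib, Pi.single_apply]

def compositionCount (w : ι → ℕ) (n : ℕ) : ℕ :=
  ∑ m ∈ weightedAntidiagonal w n, Nat.multinomial univ m

theorem succ_mul_lucasCoeff_add_single (m : ι → ℕ) (i : ι) :
    ((m i + 1 : ℕ) : ℚ) * lucasCoeff (m + Pi.single i 1) = Nat.multinomial univ m := by
  have hsum : ∑ j, (m + Pi.single i 1 : ι → ℕ) j - 1 = ∑ j, m j := by
    simp [sum_add_distrib]
  have hprod : ∏ j, (((m + Pi.single i 1 : ι → ℕ) j).factorial : ℚ) =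
      (m i + 1) * ∏ j, ((m j).factorial : ℚ) := by
    rw [Fintype.prod_eq_mul_prod_compl i, Fintype.prod_eq_mul_prod_compl i, ← mul_assoc]
    congr 1
    · simp [Nat.factorial_succ]
    · refine prod_congr rfl fun j hj => ?_
      rw [Pi.add_apply, Pi.single_eq_of_ne (by simpa using hj), add_zero]
  rw [lucasCoeff, hsum, hprod, natCast_multinomial]
  push_cast
  field_simp

theorem sum_apply_mul_lucasCoeff_add {w : ι → ℕ} (hw : ∀ i, 0 < w i) (i : ι) (n : ℕ) :
    ∑ m ∈ weightedAntidiagonal w (n + w i), (m i : ℚ) * lucasCoeff m = compositionCount w n := by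
  rw [compositionCount, Nat.cast_sum]
  symm
  refine sum_bij_ne_zero (fun m _ _ => m + Pi.single i 1) (fun m hm _ => ?_)
    (fun _ _ _ _ _ _ h => add_right_cancel h) (fun m hm hm0 => ?_) (fun m _ _ => ?_)
  · rw [mem_weightedAntidiagonal hw] at hm ⊢
    rw [weightedSum_add_single, hm]
  · have hi : 1 ≤ m i := Nat.one_le_iff_ne_zero.2 fun h => hm0 (by simp [h])
    have hm' : m - Pi.single i 1 + Pi.single i 1 = m := by
      refine tsub_add_cancel_of_le fun j => ?_
      rcases eq_or_ne j i with rfl | hj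
      · simpa using hi
      · simp [Pi.single_eq_of_ne hj]
    refine ⟨m - Pi.single i 1, ?_, by exact_mod_cast (Nat.multinomial_pos _ _).ne', hm'⟩
    rw [mem_weightedAntidiagonal hw] at hm ⊢
    rw [← hm', weightedSum_add_single] at hm
    omega
  · rw [← succ_mul_lucasCoeff_add_single m i]
    simp

theorem sum_apply_mul_lucasCoeff {w : ι → ℕ} (hw : ∀ i, 0 < w i) (i : ι) (n : ℕ) :
    ∑ m ∈ weightedAntidiagonal w n, (m i : ℚ) * lucasCoeff m =
      if w i ≤ n then (compositionCount w (n - w i) : ℚ) else 0 := by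
  split_ifs with hin
  · rw [← sum_apply_mul_lucasCoeff_add hw i, Nat.sub_add_cancel hin]
  · refine sum_eq_zero fun m hm => ?_
    have : w i * m i ≤ n := (mem_weightedAntidiagonal hw).1 hm ▸
      single_le_sum (f := fun j => w j * m j) (by simp) (mem_univ i)
    have : m i = 0 := by
      by_contra h
      exact hin (le_trans (Nat.le_mul_of_pos_right _ (Nat.pos_of_ne_zero h)) this)
    simp [this]

theorem compositionCount_eq_sum {w : ι → ℕ} (hw : ∀ i, 0 < w i) {n : ℕ} (hn : n ≠ 0) :
    compositionCount w n = ∑ i, if w i ≤ n then compositionCount w (n - w i) else 0 := by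
  have key : ∀ m ∈ weightedAntidiagonal w n, (Nat.multinomial univ m : ℚ) =
      ∑ i, (m i : ℚ) * lucasCoeff m := by
    intro m hm
    have hm0 : ∑ i, m i ≠ 0 := by
      intro h
      rw [mem_weightedAntidiagonal hw] at hm
      simp_all [sum_eq_zero_iff]
    rw [← sum_mul_lucasCoeff hm0, ← sum_mul]
    push_cast
    rfl
  rw [← Nat.cast_inj (R := ℚ), compositionCount, Nat.cast_sum, sum_congr rfl key, sum_comm]
  push_cast
  exact sum_congr rfl fun i _ => sum_apply_mul_lucasCoeff hw i n

theorem natCast_mul_sum_lucasCoeff {w : ι → ℕ} (hw : ∀ i, 0 < w i) (n : ℕ) :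
    (n : ℚ) * ∑ m ∈ weightedAntidiagonal w n, lucasCoeff m =
      ∑ i, (w i : ℚ) * if w i ≤ n then (compositionCount w (n - w i) : ℚ) else 0 := by
  have key : ∀ m ∈ weightedAntidiagonal w n,
      (n : ℚ) * lucasCoeff m = ∑ i, (w i : ℚ) * ((m i : ℚ) * lucasCoeff m) := by
    intro m hm
    rw [← (mem_weightedAntidiagonal hw).1 hm]
    push_cast
    rw [sum_mul]
    exact sum_congr rfl fun i _ => mul_assoc _ _ _
  rw [mul_sum, sum_congr rfl key, sum_comm]
  refine sum_congr rfl fun i _ => ?_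
  rw [← mul_sum, sum_apply_mul_lucasCoeff hw]

end WeightedComposition

open WeightedComposition

-- Shifted from the usual indexing: `tribonacci n` is the classical Tribonacci number `T_{n+2}`.
def tribonacci : ℕ → ℕ
  | 0 => 1
  | 1 => 1
  | 2 => 2
  | n + 3 => tribonacci (n + 2) + tribonacci (n + 1) + tribonacci n

theorem compositionCount_tribonacci (n : ℕ) :
    compositionCount (fun j : Fin 3 => (j : ℕ) + 1) n = tribonacci n := by
  induction n using Nat.strong_induction_on with
  | _ n ih =>
    rcases n with _ | _ | _ | n
    · decide
    all_goals
      rw [compositionCount_eq_sum (fun j => Nat.succ_pos _) (Nat.succ_ne_zero _)]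
      simp [Fin.sum_univ_three, ih, tribonacci]

theorem tribLucas_eq_mul_sum (n : ℕ) :
    tribLucas n = n * ∑ m ∈ weightedAntidiagonal (fun j : Fin 3 => (j : ℕ) + 1) n, lucasCoeff m := by
  have hval : ∀ m ∈ weightedAntidiagonal (fun j : Fin 3 => (j : ℕ) + 1) n, ∀ j,
      (Fin.ofNat (n + 1) (m j) : ℕ) = m j := fun m hm j =>
    Nat.mod_eq_of_lt (Nat.lt_succ_of_le (apply_le_of_mem_weightedAntidiagonal hm j))
  rw [tribLucas]
  congr 1
  refine sum_nbij' (fun m j => (m j : ℕ)) (fun m j => Fin.ofNat (n + 1) (m j)) ?_ ?_ ?_ ?_ ?_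
  · intro m hm
    rw [mem_weightedAntidiagonal (fun j => Nat.succ_pos _)]
    simpa using hm
  · intro m hm
    refine mem_filter.2 ⟨mem_univ _, ?_⟩
    simp only [hval m hm]
    exact (mem_weightedAntidiagonal (fun j => Nat.succ_pos _)).1 hm
  · intro m _
    exact funext fun j => Fin.ofNat_val_eq_self (m j)
  · intro m hm
    exact funext (hval m hm)
  · intro m _
    rfl

theorem tribLucas_eq (n : ℕ) :
    tribLucas n = ∑ j : Fin 3, ((j : ℕ) + 1 : ℚ) *
      if (j : ℕ) + 1 ≤ n then (tribonacci (n - ((j : ℕ) + 1)) : ℚ) else 0 := by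
  simp_rw [tribLucas_eq_mul_sum, natCast_mul_sum_lucasCoeff (fun j => Nat.succ_pos _),
    compositionCount_tribonacci]
  push_cast
  rfl

theorem tribLucas_add_three (n : ℕ) :
    tribLucas (n + 3) = tribonacci (n + 2) + 2 * tribonacci (n + 1) + 3 * tribonacci n := by
  rw [tribLucas_eq, Fin.sum_univ_three]
  norm_num [show n + 3 - 2 = n + 1 by omega]

theorem tribLucas_add_six (n : ℕ) :
    tribLucas (n + 6) = tribLucas (n + 5) + tribLucas (n + 4) + tribLucas (n + 3) := by
  simp only [tribLucas_add_three, tribonacci]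
  push_cast
  ring

/-- The third-order Lucas numbers `L_n = tribLucas n` have initial values
`L₁,…,L₈ = 1, 3, 7, 11, 21, 39, 71, 131` and satisfy
`L_n = L_{n-1} + L_{n-2} + L_{n-3}` for `n ≥ 4`. -/
theorem tribLucas_values :
    (tribLucas 1 = 1 ∧ tribLucas 2 = 3 ∧ tribLucas 3 = 7 ∧ tribLucas 4 = 11 ∧
      tribLucas 5 = 21 ∧ tribLucas 6 = 39 ∧ tribLucas 7 = 71 ∧ tribLucas 8 = 131)
    ∧ ∀ n, 4 ≤ n → tribLucas n = tribLucas (n - 1) + tribLucas (n - 2) + tribLucas (n - 3) := by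
  refine ⟨by norm_num [tribLucas_eq, Fin.sum_univ_three, tribonacci], fun n hn => ?_⟩
  obtain ⟨k, rfl⟩ : ∃ k, n = k + 4 := ⟨n - 4, by omega⟩
  rcases k with _ | _ | k
  · norm_num [tribLucas_eq, Fin.sum_univ_three, tribonacci]
  · norm_num [tribLucas_eq, Fin.sum_univ_three, tribonacci]
  · simpa using tribLucas_add_six k
end
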